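/- arXiv:2011.04220 — 5 statements merged into one kernel-verified Lean document; each statement's English description precedes it below -/
import Mathlib

section
/- The harmonic (stuffle) product on the ℚ-vector space ℐ spanned by formal symbols [k_1,...,k_r] of indices, defined inductively by [k]∗[∅]=[∅]∗[k]=[k] and [k,k]∗[l,l] = [([k,k]∗[l]),l] + [([k]∗[l,l]),k] + [([k]∗[l]), k+l], is commutative and associative with unit [∅]. -/
/-!
On reversed indices the defining recursion peels off first letters, so `hpAux` is the usual
quasi-shuffle recursion, and `hmul` is its bilinear extension `hmulAux` conjugated by reversal.
Commutativity and the unit are read off the symmetric recursion. For associativity it suffices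
that `(k ∗ l) ∗ m = k ∗ (l ∗ m)` on basis symbols `k = a k'`, `l = b l'`, `m = c m'`. By induction
on `|k| + |l| + |m|`: expanding both sides along the first letters gives terms prefixed by
`a, b, c, a + b, a + c, b + c, a + b + c`, which match by the inductive hypothesis once the
`c`-prefixed terms on the left are regrouped into `(k ∗ l) ∗ m'` and the `a`-prefixed terms on
the right into `k' ∗ (l ∗ m)`.
-/

/-- An index: a finite sequence of positive integers. -/
abbrev Idx := List ℕ+

/-- The `ℚ`-linear space `ℐ` spanned by formal symbols of indices. -/
abbrev IdxAlg := Idx →₀ ℚ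

/-- Auxiliary harmonic product on indices *stored in reversed order*, so that the
recursion acts on the last components of the original indices, as in the paper:
`[k,k]∗[l,l] = [([k,k]∗[l]),l] + [([k]∗[l,l]),k] + [([k]∗[l]),k+l]`. -/
noncomputable def hpAux : Idx → Idx → IdxAlg
  | [], l => Finsupp.single l 1
  | a :: as, [] => Finsupp.single (a :: as) 1
  | a :: as, b :: bs =>
      Finsupp.mapDomain (a :: ·) (hpAux as (b :: bs)) +
      Finsupp.mapDomain (b :: ·) (hpAux (a :: as) bs) +
      Finsupp.mapDomain ((a + b) :: ·) (hpAux as bs)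
termination_by k l => k.length + l.length

/-- The harmonic (stuffle) product of two index symbols. -/
noncomputable def hp (k l : Idx) : IdxAlg :=
  Finsupp.mapDomain List.reverse (hpAux k.reverse l.reverse)

/-- The bilinear extension of the harmonic product to `ℐ`. -/
noncomputable def hmul (u v : IdxAlg) : IdxAlg :=
  u.sum fun k ck => v.sum fun l cl => (ck * cl) • hp k l

/-- The star-sum `[l₁,…,l_s]^⋆`: the sum of all `[l₁□⋯□l_s]` with each `□` replaced by
`+` or `,`. -/
noncomputable def starSym : Idx → IdxAlg
  | [] => Finsupp.single [] 1
  | [a] => Finsupp.single [a] 1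
  | a :: b :: rest =>
      Finsupp.mapDomain (a :: ·) (starSym (b :: rest)) + starSym ((a + b) :: rest)
termination_by l => l.length

/-- The linear map `S̃ : ℐ → ℐ` with `S̃([k]) = (−1)^{dep k}[k]^⋆`. -/
noncomputable def Stilde (u : IdxAlg) : IdxAlg :=
  u.sum fun k c => ((-1 : ℚ) ^ k.length * c) • starSym k

open Finsupp

noncomputable def lcons (x : ℕ+) : IdxAlg →ₗ[ℚ] IdxAlg := lmapDomain ℚ ℚ (x :: ·)

noncomputable def lreverse : IdxAlg →ₗ[ℚ] IdxAlg := lmapDomain ℚ ℚ List.reverse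

noncomputable def hmulAux : IdxAlg →ₗ[ℚ] IdxAlg →ₗ[ℚ] IdxAlg :=
  linearCombination ℚ fun k => linearCombination ℚ (hpAux k)

lemma lcons_single (x : ℕ+) (k : Idx) (c : ℚ) : lcons x (single k c) = single (x :: k) c :=
  mapDomain_single

lemma lreverse_single (k : Idx) (c : ℚ) : lreverse (single k c) = single k.reverse c :=
  mapDomain_single

lemma lreverse_lreverse (u : IdxAlg) : lreverse (lreverse u) = u := by
  simp [lreverse, ← mapDomain_comp]

lemma hpAux_nil_left (l : Idx) : hpAux [] l = single l 1 := by
  simp [hpAux]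

lemma hpAux_nil_right (k : Idx) : hpAux k [] = single k 1 := by
  cases k <;> simp [hpAux]

lemma hpAux_cons_cons (a b : ℕ+) (as bs : Idx) :
    hpAux (a :: as) (b :: bs) =
      lcons a (hpAux as (b :: bs)) + lcons b (hpAux (a :: as) bs) + lcons (a + b) (hpAux as bs) := by
  rw [hpAux]; rfl

lemma hpAux_comm (k l : Idx) : hpAux k l = hpAux l k := by
  match k, l with
  | [], l => rw [hpAux_nil_left, hpAux_nil_right]
  | a :: as, [] => rw [hpAux_nil_left, hpAux_nil_right]
  | a :: as, b :: bs =>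
    rw [hpAux_cons_cons, hpAux_cons_cons, hpAux_comm as (b :: bs), hpAux_comm (a :: as) bs,
      hpAux_comm as bs, add_comm b a]
    abel
termination_by k.length + l.length

lemma hmulAux_single_single (k l : Idx) (c d : ℚ) :
    hmulAux (single k c) (single l d) = (c * d) • hpAux k l := by
  simp [hmulAux, mul_smul, smul_comm c d]

lemma hmulAux_apply (u v : IdxAlg) :
    hmulAux u v = u.sum fun k c => v.sum fun l d => (c * d) • hpAux k l := by
  simp [hmulAux, linearCombination_apply, smul_sum, mul_smul]

lemma hmulAux_comm (u v : IdxAlg) : hmulAux u v = hmulAux v u := by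
  suffices hmulAux.flip = hmulAux from LinearMap.congr_fun₂ this v u
  ext k l : 4
  simp [hmulAux_single_single, hpAux_comm]

lemma hmulAux_one_left (u : IdxAlg) : hmulAux (single [] 1) u = u := by
  suffices hmulAux (single [] 1) = LinearMap.id from LinearMap.congr_fun this u
  ext l
  simp [hmulAux_single_single, hpAux_nil_left]

lemma hmulAux_one_right (u : IdxAlg) : hmulAux u (single [] 1) = u := by
  rw [hmulAux_comm, hmulAux_one_left]

lemma hmulAux_lcons_lcons (a b : ℕ+) (u v : IdxAlg) :
    hmulAux (lcons a u) (lcons b v) =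
      lcons a (hmulAux u (lcons b v)) + lcons b (hmulAux (lcons a u) v) +
        lcons (a + b) (hmulAux u v) := by
  induction u using Finsupp.induction_linear with
  | zero => simp
  | add u₁ u₂ h₁ h₂ => simp only [map_add, LinearMap.add_apply, h₁, h₂]; abel
  | single k c =>
    induction v using Finsupp.induction_linear with
    | zero => simp
    | add v₁ v₂ h₁ h₂ => simp only [map_add, h₁, h₂]; abel
    | single l d =>
      simp only [lcons_single, hmulAux_single_single, hpAux_cons_cons, map_smul, smul_add]

lemma hmulAux_hpAux_single (k l m : Idx) :
    hmulAux (hpAux k l) (single m 1) = hmulAux (single k 1) (hpAux l m) := by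
  match k, l, m with
  | [], l, m => rw [hpAux_nil_left, hmulAux_one_left, hmulAux_single_single, one_mul, one_smul]
  | k, [], m => rw [hpAux_nil_right, hpAux_nil_left]
  | k, l, [] => rw [hmulAux_one_right, hpAux_nil_right, hmulAux_single_single, one_mul, one_smul]
  | a :: as, b :: bs, c :: cs =>
    have single_cons (x : ℕ+) (xs : Idx) : (single (x :: xs) 1 : IdxAlg) = lcons x (single xs 1) :=
      (lcons_single x xs 1).symm
    have left_cs : hmulAux (lcons a (hpAux as (b :: bs))) (single cs 1) +
        hmulAux (lcons b (hpAux (a :: as) bs)) (single cs 1) +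
        hmulAux (lcons (a + b) (hpAux as bs)) (single cs 1) =
        hmulAux (single (a :: as) 1) (hpAux (b :: bs) cs) := by
      rw [← hmulAux_hpAux_single, hpAux_cons_cons a b]
      simp only [map_add, LinearMap.add_apply]
    have right_as : hmulAux (single as 1) (lcons b (hpAux bs (c :: cs))) +
        hmulAux (single as 1) (lcons c (hpAux (b :: bs) cs)) +
        hmulAux (single as 1) (lcons (b + c) (hpAux bs cs)) =
        hmulAux (single as 1) (hpAux (b :: bs) (c :: cs)) := by
      rw [hpAux_cons_cons b c]
      simp only [map_add]
    rw [hpAux_cons_cons a b, hpAux_cons_cons b c, single_cons c, single_cons a]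
    simp only [map_add, LinearMap.add_apply, hmulAux_lcons_lcons]
    rw [← single_cons c, ← single_cons a, hmulAux_hpAux_single as, hmulAux_hpAux_single (a :: as),
      hmulAux_hpAux_single as bs, hmulAux_hpAux_single as, hmulAux_hpAux_single (a :: as) bs,
      hmulAux_hpAux_single as bs, ← left_cs, ← right_as, ← add_assoc a b c]
    simp only [map_add]
    abel
termination_by k.length + l.length + m.length

lemma hmulAux_assoc (u v w : IdxAlg) : hmulAux (hmulAux u v) w = hmulAux u (hmulAux v w) := by
  suffices hmulAux.compr₂ (hmulAux.flip w) = hmulAux.compl₂ (hmulAux.flip w) from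
    LinearMap.congr_fun₂ this u v
  ext k l : 4
  suffices hmulAux (hpAux k l) = hmulAux (single k 1) ∘ₗ hmulAux (single l 1) by
    simpa [hmulAux_single_single] using LinearMap.congr_fun this w
  ext m
  simp [hmulAux_single_single, hmulAux_hpAux_single]

lemma hmul_eq_lreverse_hmulAux (u v : IdxAlg) :
    hmul u v = lreverse (hmulAux (lreverse u) (lreverse v)) := by
  simp only [hmul, hp, hmulAux_apply, lreverse, lmapDomain_apply,
    sum_mapDomain_index_inj List.reverse_injective, map_finsuppSum, map_smul]

/-- The harmonic product on `ℐ` is commutative and associative with unit `[∅]`. -/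
theorem hmul_comm_assoc_one :
    (∀ u v : IdxAlg, hmul u v = hmul v u) ∧
    (∀ u v w : IdxAlg, hmul (hmul u v) w = hmul u (hmul v w)) ∧
    (∀ u : IdxAlg, hmul (Finsupp.single [] 1) u = u ∧ hmul u (Finsupp.single [] 1) = u) := by
  refine ⟨fun u v => ?_, fun u v w => ?_, fun u => ⟨?_, ?_⟩⟩ <;>
    simp only [hmul_eq_lreverse_hmulAux, lreverse_lreverse, lreverse_single, List.reverse_nil]
  · rw [hmulAux_comm]
  · rw [hmulAux_assoc]
  · rw [hmulAux_one_left, lreverse_lreverse]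
  · rw [hmulAux_one_right, lreverse_lreverse]
end

section
/- The linear map S̃: ℐ → ℐ defined by S̃([k₁,...,k_r]) = (−1)^r [k₁,...,k_r]^⋆, where [l₁,...,l_s]^⋆ is the sum of all [l₁□⋯□l_s] with each □ replaced by '+' or ',', is an involution: S̃ ∘ S̃ = id. -/
/-
Write `c_a` for prepending `a` to an index and `h_a` for adding `a` to its first entry.
For nonempty `l` the recursion of the star-sum reads `[a :: l]^⋆ = c_a [l]^⋆ + h_a [l]^⋆`;
since `c_a` raises the depth by one and `h_a` keeps it, this gives
`S̃ ∘ c_a = -(c_a ∘ S̃) - S̃ ∘ h_a` on the span of nonempty indices. Applying `S̃` to the recursion, the `h_a` terms cancel,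
so by induction `S̃ [k]^⋆ = (-1)^{dep k} [k]`, whence `S̃ (S̃ [k]) = [k]`.
-/

def addHead (a : ℕ+) : Idx → Idx
  | [] => [a]
  | b :: t => (a + b) :: t

noncomputable def stildeLinearMap : IdxAlg →ₗ[ℚ] IdxAlg :=
  Finsupp.linearCombination ℚ fun k => (-1 : ℚ) ^ k.length • starSym k

theorem coe_stildeLinearMap : ⇑stildeLinearMap = Stilde := by
  ext u : 1
  rw [stildeLinearMap, Finsupp.linearCombination_apply, Stilde]
  exact Finsupp.sum_congr fun k _ => by rw [mul_smul, smul_comm]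

theorem stildeLinearMap_single (k : Idx) (c : ℚ) :
    stildeLinearMap (Finsupp.single k c) = (c * (-1 : ℚ) ^ k.length) • starSym k := by
  simp [stildeLinearMap, mul_smul]

theorem mapDomain_addHead_starSym (a b : ℕ+) (t : Idx) :
    Finsupp.mapDomain (addHead a) (starSym (b :: t)) = starSym ((a + b) :: t) := by
  induction t generalizing b with
  | nil => simp [starSym, Finsupp.mapDomain_single, addHead]
  | cons c r ih =>
    rw [starSym.eq_3, starSym.eq_3, Finsupp.mapDomain_add, ← Finsupp.mapDomain_comp, ih,
      add_assoc]
    rfl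

theorem starSym_cons_mem_supported (a : ℕ+) (t : Idx) :
    starSym (a :: t) ∈ Finsupp.supported ℚ ℚ {l : Idx | l ≠ []} := by
  induction t generalizing a with
  | nil =>
    rw [starSym.eq_2]
    exact Finsupp.single_mem_supported ℚ _ (List.cons_ne_nil a [])
  | cons b r ih =>
    rw [starSym.eq_3]
    refine Submodule.add_mem _ ?_ (ih _)
    exact Finsupp.supported_comap_lmapDomain ℚ ℚ _ _
      (Finsupp.supported_mono (fun l _ => List.cons_ne_nil a l) (ih b))

theorem stildeLinearMap_mapDomain_cons (a : ℕ+) {v : IdxAlg}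
    (hv : v ∈ Finsupp.supported ℚ ℚ {l : Idx | l ≠ []}) :
    stildeLinearMap (Finsupp.mapDomain (a :: ·) v) =
      -Finsupp.mapDomain (a :: ·) (stildeLinearMap v) -
        stildeLinearMap (Finsupp.mapDomain (addHead a) v) := by
  rw [Finsupp.supported_eq_span_single] at hv
  refine LinearMap.eqOn_span (R := ℚ)
    (f := stildeLinearMap ∘ₗ Finsupp.lmapDomain ℚ ℚ (a :: ·))
    (g := -(Finsupp.lmapDomain ℚ ℚ (a :: ·) ∘ₗ stildeLinearMap) -
      stildeLinearMap ∘ₗ Finsupp.lmapDomain ℚ ℚ (addHead a)) ?_ hv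
  rintro _ ⟨_ | ⟨b, t⟩, hl, rfl⟩
  · exact absurd rfl hl
  · simp only [LinearMap.comp_apply, LinearMap.sub_apply, LinearMap.neg_apply,
      Finsupp.lmapDomain_apply, Finsupp.mapDomain_single, stildeLinearMap_single, one_mul,
      addHead, starSym.eq_3, List.length_cons, pow_succ, Finsupp.mapDomain_smul]
    module

theorem stildeLinearMap_starSym (k : Idx) :
    stildeLinearMap (starSym k) = (-1 : ℚ) ^ k.length • Finsupp.single k 1 := by
  induction k using starSym.induct with
  | case1 => simp [starSym, stildeLinearMap_single]
  | case2 a => simp [starSym, stildeLinearMap_single]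
  | case3 a b t ih _ =>
    rw [starSym.eq_3, map_add, stildeLinearMap_mapDomain_cons a (starSym_cons_mem_supported b t),
      mapDomain_addHead_starSym, ih, Finsupp.mapDomain_smul, Finsupp.mapDomain_single]
    simp only [List.length_cons, pow_succ]
    module

theorem stildeLinearMap_comp_self : stildeLinearMap ∘ₗ stildeLinearMap = LinearMap.id := by
  refine Finsupp.lhom_ext fun k c => ?_
  rw [LinearMap.comp_apply, stildeLinearMap_single, map_smul, stildeLinearMap_starSym,
    smul_smul, mul_assoc, ← pow_add, Even.neg_one_pow ⟨_, rfl⟩, mul_one, Finsupp.smul_single_one,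
    LinearMap.id_apply]

/-- The linear map `S̃` with `S̃([k]) = (−1)^{dep k}[k]^⋆` is an involution. -/
theorem Stilde_involution : ∀ u : IdxAlg, Stilde (Stilde u) = u := by
  intro u
  rw [← coe_stildeLinearMap, ← LinearMap.comp_apply, stildeLinearMap_comp_self,
    LinearMap.id_apply]
end

section
/- The map S̃: ℐ → ℐ with S̃([k]) = (−1)^{dep k}[k]^⋆ is an algebra homomorphism for the harmonic product: S̃(u ∗ v) = S̃(u) ∗ S̃(v) for all u, v ∈ ℐ. -/
/-!
Read backwards, the harmonic product is the recursion `hpAux` on first letters: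
`ak ∗ bl = a(k ∗ bl) + b(ak ∗ l) + (a+b)(k ∗ l)`. Writing `consL x` for prepending `x` and
`addHeadL x` for adding `x` to the first letter, the star-sum satisfies
`(x m)^⋆ = F_x m^⋆` with `F_x = starConsL x = consL x + addHeadL x`, so
`S̃ ∘ consL x = -F_x ∘ S̃`. Expanding both factors shows that images of the `F_x` obey the
same recursion with the diagonal term negated:
`F_a u ∗ F_b v = F_a (u ∗ F_b v) + F_b (F_a u ∗ v) - F_{a+b} (u ∗ v)`.
Induction along the recursion then gives `S̃ (k ∗ l) = S̃ k ∗ S̃ l`, the signs `(-1)^{dep}`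
absorbing the minus signs. Finally star-sums commute with reversal, hence so does `S̃`.
-/

namespace IdxAlg

open Finsupp

noncomputable def bilinLift (f : Idx → Idx → IdxAlg) : IdxAlg →ₗ[ℚ] IdxAlg →ₗ[ℚ] IdxAlg :=
  linearCombination ℚ fun k => linearCombination ℚ (f k)

@[simp] lemma bilinLift_single_single (f : Idx → Idx → IdxAlg) (k l : Idx) (c d : ℚ) :
    bilinLift f (single k c) (single l d) = (c * d) • f k l := by
  simp [bilinLift, smul_smul]

lemma bilinLift_ext {f g : IdxAlg →ₗ[ℚ] IdxAlg →ₗ[ℚ] IdxAlg}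
    (h : ∀ k l, f (single k 1) (single l 1) = g (single k 1) (single l 1)) : f = g := by
  ext k l : 4
  exact h k l

lemma hmul_eq_bilinLift (u v : IdxAlg) : hmul u v = bilinLift hp u v := by
  simp only [hmul, bilinLift, linearCombination_apply, LinearMap.finsupp_sum_apply,
    LinearMap.smul_apply, Finsupp.smul_sum, smul_smul]

noncomputable def consL (x : ℕ+) : IdxAlg →ₗ[ℚ] IdxAlg := lmapDomain ℚ ℚ (x :: ·)

noncomputable def addHead (x : ℕ+) : Idx → IdxAlg
  | [] => 0
  | c :: t => single ((x + c) :: t) 1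

noncomputable def addHeadL (x : ℕ+) : IdxAlg →ₗ[ℚ] IdxAlg := linearCombination ℚ (addHead x)

noncomputable def starConsL (x : ℕ+) : IdxAlg →ₗ[ℚ] IdxAlg := consL x + addHeadL x

noncomputable def revL : IdxAlg →ₗ[ℚ] IdxAlg := lmapDomain ℚ ℚ List.reverse

noncomputable def stildeL : IdxAlg →ₗ[ℚ] IdxAlg :=
  linearCombination ℚ fun k => (-1 : ℚ) ^ k.length • starSym k

lemma Stilde_eq_stildeL (u : IdxAlg) : Stilde u = stildeL u := by
  simp only [Stilde, stildeL, linearCombination_apply, smul_smul, mul_comm]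

@[simp] lemma consL_single (x : ℕ+) (w : Idx) (c : ℚ) :
    consL x (single w c) = single (x :: w) c := by
  simp [consL]

@[simp] lemma addHeadL_single_nil (x : ℕ+) (c : ℚ) : addHeadL x (single [] c) = 0 := by
  simp [addHeadL, addHead]

@[simp] lemma addHeadL_single_cons (x d : ℕ+) (t : Idx) (c : ℚ) :
    addHeadL x (single (d :: t) c) = single ((x + d) :: t) c := by
  simp [addHeadL, addHead]

@[simp] lemma starConsL_single_nil (x : ℕ+) (c : ℚ) :
    starConsL x (single [] c) = single [x] c := by
  simp [starConsL]

@[simp] lemma starConsL_single_cons (x d : ℕ+) (t : Idx) (c : ℚ) :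
    starConsL x (single (d :: t) c) = single (x :: d :: t) c + single ((x + d) :: t) c := by
  simp [starConsL]

@[simp] lemma revL_single (w : Idx) (c : ℚ) : revL (single w c) = single w.reverse c := by
  simp [revL]

@[simp] lemma stildeL_single (w : Idx) (c : ℚ) :
    stildeL (single w c) = (c * (-1) ^ w.length) • starSym w := by
  simp [stildeL, smul_smul]

lemma starConsL_apply (x : ℕ+) (u : IdxAlg) : starConsL x u = consL x u + addHeadL x u := rfl

lemma addHeadL_consL (x y : ℕ+) (u : IdxAlg) : addHeadL x (consL y u) = consL (x + y) u := by
  induction u using induction_linear <;> simp_all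

lemma addHeadL_starConsL (x y : ℕ+) (u : IdxAlg) :
    addHeadL x (starConsL y u) = starConsL (x + y) u := by
  induction u using induction_linear with
  | zero => simp
  | add f g hf hg => simp only [map_add, hf, hg]
  | single w c => cases w <;> simp [add_assoc]

lemma starConsL_consL (x y : ℕ+) (u : IdxAlg) :
    starConsL x (consL y u) = consL x (consL y u) + consL (x + y) u := by
  rw [starConsL_apply, addHeadL_consL]

lemma starSym_nil : starSym [] = single [] 1 := by
  rw [starSym]

lemma starSym_cons (x : ℕ+) (m : Idx) : starSym (x :: m) = starConsL x (starSym m) := by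
  induction m using starSym.induct generalizing x with
  | case1 => simp [starSym]
  | case2 a => simp [starSym]
  | case3 a b rest ih _ =>
    rw [starSym, ih (x + a), ih a, starConsL_apply x, addHeadL_starConsL]
    rfl

lemma stildeL_consL (x : ℕ+) (u : IdxAlg) : stildeL (consL x u) = -starConsL x (stildeL u) := by
  induction u using induction_linear with
  | zero => simp
  | add f g hf hg => simp only [map_add, hf, hg, neg_add]
  | single w c => simp [starSym_cons, pow_succ, ← neg_smul]

lemma hpAux_nil_left (l : Idx) : hpAux [] l = single l 1 := by
  rw [hpAux]

lemma hpAux_nil_right (k : Idx) : hpAux k [] = single k 1 := by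
  cases k <;> rw [hpAux]

lemma hpAux_cons_cons (a b : ℕ+) (k l : Idx) :
    hpAux (a :: k) (b :: l) =
      consL a (hpAux k (b :: l)) + consL b (hpAux (a :: k) l) + consL (a + b) (hpAux k l) := by
  rw [hpAux]; rfl

lemma bilinLift_hpAux_nil_left (v : IdxAlg) : bilinLift hpAux (single [] 1) v = v := by
  induction v using induction_linear <;> simp_all [hpAux_nil_left]

lemma bilinLift_hpAux_nil_right (u : IdxAlg) : bilinLift hpAux u (single [] 1) = u := by
  induction u using induction_linear <;> simp_all [hpAux_nil_right]

lemma bilinLift_hpAux_starConsL_single (a b : ℕ+) (k l : Idx) :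
    bilinLift hpAux (starConsL a (single k 1)) (starConsL b (single l 1)) =
      starConsL a (bilinLift hpAux (single k 1) (starConsL b (single l 1))) +
      starConsL b (bilinLift hpAux (starConsL a (single k 1)) (single l 1)) -
      starConsL (a + b) (hpAux k l) := by
  cases k <;> cases l <;>
  · simp only [starConsL_single_nil, starConsL_single_cons, map_add, LinearMap.add_apply,
      bilinLift_single_single, one_mul, one_smul, hpAux_nil_left, hpAux_nil_right,
      hpAux_cons_cons, starConsL_consL, consL_single]
    simp only [add_comm (G := ℕ+), add_left_comm (G := ℕ+)]
    abel

lemma bilinLift_hpAux_starConsL (a b : ℕ+) (u v : IdxAlg) :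
    bilinLift hpAux (starConsL a u) (starConsL b v) =
      starConsL a (bilinLift hpAux u (starConsL b v)) +
      starConsL b (bilinLift hpAux (starConsL a u) v) -
      starConsL (a + b) (bilinLift hpAux u v) := by
  have key := bilinLift_ext (f := (bilinLift hpAux).compl₁₂ (starConsL a) (starConsL b))
    (g := ((bilinLift hpAux).compl₂ (starConsL b)).compr₂ (starConsL a) +
      ((bilinLift hpAux).comp (starConsL a)).compr₂ (starConsL b) -
      (bilinLift hpAux).compr₂ (starConsL (a + b)))
    fun k l => by simpa using bilinLift_hpAux_starConsL_single a b k l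
  simpa using LinearMap.congr_fun₂ key u v

lemma stildeL_hpAux (k l : Idx) :
    stildeL (hpAux k l) =
      (-1 : ℚ) ^ (k.length + l.length) • bilinLift hpAux (starSym k) (starSym l) := by
  induction k, l using hpAux.induct with
  | case1 l => simp [hpAux_nil_left, starSym_nil, bilinLift_hpAux_nil_left]
  | case2 a k => simp [hpAux_nil_right, starSym_nil, bilinLift_hpAux_nil_right]
  | case3 a k b l ih₁ ih₂ ih₃ =>
    simp only [hpAux_cons_cons, map_add, stildeL_consL, ih₁, ih₂, ih₃, List.length_cons,
      starSym_cons, bilinLift_hpAux_starConsL, map_smul, pow_add, pow_one]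
    module

lemma stildeL_bilinLift_hpAux (u v : IdxAlg) :
    stildeL (bilinLift hpAux u v) = bilinLift hpAux (stildeL u) (stildeL v) := by
  have key := bilinLift_ext (f := (bilinLift hpAux).compr₂ stildeL)
    (g := (bilinLift hpAux).compl₁₂ stildeL stildeL)
    fun k l => by simp [stildeL_hpAux, pow_add, smul_smul, mul_comm]
  simpa using LinearMap.congr_fun₂ key u v

lemma revL_revL (u : IdxAlg) : revL (revL u) = u := by
  induction u using induction_linear <;> simp_all

noncomputable def starSnocL (x : ℕ+) : IdxAlg →ₗ[ℚ] IdxAlg := revL ∘ₗ starConsL x ∘ₗ revL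

lemma starSnocL_single (x : ℕ+) (w : Idx) (c : ℚ) :
    starSnocL x (single w c) = revL (starConsL x (single w.reverse c)) := by
  simp [starSnocL]

@[simp] lemma starSnocL_single_nil (x : ℕ+) (c : ℚ) :
    starSnocL x (single [] c) = single [x] c := by
  simp [starSnocL_single]

@[simp] lemma starSnocL_single_singleton (x d : ℕ+) (c : ℚ) :
    starSnocL x (single [d] c) = single [d, x] c + single [x + d] c := by
  simp [starSnocL_single]

lemma starSnocL_single_cons (x y : ℕ+) (w : Idx) (c : ℚ) (hw : w ≠ []) :
    starSnocL x (single (y :: w) c) = consL y (starSnocL x (single w c)) := by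
  obtain ⟨w, z, rfl⟩ := List.eq_nil_or_concat w |>.resolve_left hw
  simp [starSnocL_single]

lemma starConsL_starSnocL_comm (c x : ℕ+) (u : IdxAlg) :
    starConsL c (starSnocL x u) = starSnocL x (starConsL c u) := by
  induction u using induction_linear with
  | zero => simp
  | add f g hf hg => simp only [map_add, hf, hg]
  | single w q =>
    match w with
    | [] => simp [add_comm]
    | [d] =>
      simp [starSnocL_single_cons x c [d] q (List.cons_ne_nil _ _), add_left_comm c x]
      abel
    | d :: e :: r =>
      simp only [starSnocL_single_cons x _ _ q (List.cons_ne_nil _ _), starConsL_consL,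
        starConsL_single_cons, map_add]

lemma starSym_append_singleton (x : ℕ+) (w : Idx) :
    starSym (w ++ [x]) = starSnocL x (starSym w) := by
  induction w with
  | nil => simp [starSym_nil, starSym]
  | cons c r ih => rw [List.cons_append, starSym_cons, ih, starSym_cons, starConsL_starSnocL_comm]

lemma starSym_reverse (w : Idx) : starSym w.reverse = revL (starSym w) := by
  induction w with
  | nil => simp [starSym_nil]
  | cons x r ih =>
    rw [List.reverse_cons, starSym_append_singleton, ih, starSym_cons, starSnocL,
      LinearMap.comp_apply, LinearMap.comp_apply, revL_revL]

lemma stildeL_revL (u : IdxAlg) : stildeL (revL u) = revL (stildeL u) := by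
  induction u using induction_linear <;> simp_all [starSym_reverse]

lemma hmul_eq_revL (u v : IdxAlg) : hmul u v = revL (bilinLift hpAux (revL u) (revL v)) := by
  have key := bilinLift_ext (f := bilinLift hp)
    (g := ((bilinLift hpAux).compl₁₂ revL revL).compr₂ revL)
    fun k l => by simp [hp, revL]
  simpa [hmul_eq_bilinLift] using LinearMap.congr_fun₂ key u v

end IdxAlg

/-- `S̃` is an algebra homomorphism for the harmonic product:
`S̃(u ∗ v) = S̃(u) ∗ S̃(v)`. -/
theorem Stilde_hmul : ∀ u v : IdxAlg, Stilde (hmul u v) = hmul (Stilde u) (Stilde v) := by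
  intro u v
  simp only [IdxAlg.Stilde_eq_stildeL, IdxAlg.hmul_eq_revL, IdxAlg.stildeL_revL,
    IdxAlg.stildeL_bilinLift_hpAux]
end

section
/- For any pair of nonempty indices and each j = 0,…,s, with k an index, l = (l₁,…,l_s), and a a positive integer, define the anti-hook symbol via the two defining properties. Then the alternating sum Σ_{j=0}^{s} (−1)^j [k, a, l₁,…,l_j] ∗ [l_s,…,l_{j+1}]^⋆ equals the anti-hook symbol [k // reverse(l); a] in ℐ. -/
/-- The defining properties of the anti-hook symbols `[k // l; a] ∈ ℐ`:
(1) `[(k)//∅; a] = [k,a]` and `[∅//(l); a] = [l,a]^⋆`;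
(2) `[(k₁,…,k_{r−1})//(l); k_r] + [(k)//(l₁,…,l_{s−1}); l_s] = [k₁,…,k_r] ∗ [l₁,…,l_s]^⋆`
for nonempty `k`, `l`. -/
def IsAntiHook (AH : Idx → Idx → ℕ+ → IdxAlg) : Prop :=
  (∀ (k : Idx) (a : ℕ+), AH k [] a = Finsupp.single (k ++ [a]) 1) ∧
  (∀ (l : Idx) (a : ℕ+), AH [] l a = starSym (l ++ [a])) ∧
  (∀ (k l : Idx) (a b : ℕ+),
    AH k (l ++ [b]) a + AH (k ++ [a]) l b =
      hmul (Finsupp.single (k ++ [a]) 1) (starSym (l ++ [b])))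

lemma hpAux_nil_right_s15 (x : Idx) : hpAux x [] = Finsupp.single x 1 := by
  cases x <;> simp [hpAux]

lemma hp_nil_right (x : Idx) : hp x [] = Finsupp.single x 1 := by
  simp [hp, hpAux_nil_right_s15, Finsupp.mapDomain_single]

lemma hmul_single_single (u v : Idx) :
    hmul (Finsupp.single u 1) (Finsupp.single v 1) = hp u v := by
  rw [hmul, Finsupp.sum_single_index, Finsupp.sum_single_index] <;> simp

/-- For indices `k`, `l = (l₁,…,l_s)` and a positive integer `a`,
`Σ_{j=0}^{s} (−1)^j [k,a,l₁,…,l_j] ∗ [l_s,…,l_{j+1}]^⋆ = [k // reverse(l); a]` in `ℐ`. -/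
theorem alternating_sum_eq_antiHook (AH : Idx → Idx → ℕ+ → IdxAlg) (hAH : IsAntiHook AH)
    (k l : Idx) (a : ℕ+) :
    ∑ j ∈ Finset.range (l.length + 1),
        ((-1 : ℚ) ^ j) •
          hmul (Finsupp.single (k ++ [a] ++ l.take j) 1) (starSym (l.drop j).reverse) =
      AH k l.reverse a := by
  induction l generalizing k a with
  | nil =>
      simp [hmul_single_single, hp_nil_right, starSym, hAH.1]
  | cons b m ih =>
      have key := hAH.2.2 k m.reverse a b
      have ihv := ih (k ++ [a]) b
      rw [List.length_cons, Finset.sum_range_succ']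
      simp only [List.take_succ_cons, List.drop_succ_cons, List.take_zero, List.drop_zero,
        pow_succ, List.reverse_cons, List.append_nil, pow_zero, one_smul,
        List.append_assoc, List.singleton_append, List.cons_append, List.nil_append] at *
      have : ∑ j ∈ Finset.range (m.length + 1),
          ((-1:ℚ) ^ j * -1) • hmul (Finsupp.single (k ++ a :: b :: m.take j) 1)
            (starSym (m.drop j).reverse)
          = -(AH (k ++ [a]) m.reverse b) := by
        rw [← ihv]
        rw [← Finset.sum_neg_distrib]
        refine Finset.sum_congr rfl fun j _ => ?_
        simp [mul_comm, List.append_assoc]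
      rw [this, ← key]
      abel
end

section
/- Harmonic product of an MZV and a zeta-star value as anti-hook Schur MZVs: for nonempty admissible indices (k₁,…,k_r) and (l₁,…,l_s), ζ(k₁,…,k_r)·ζ*(l₁,…,l_s) = ζ[(k₁,…,k_{r−1})//(l₁,…,l_s); k_r] + ζ[(k₁,…,k_r)//(l₁,…,l_{s−1}); l_s], where ζ[(k)//(l); a] = Σ over positive integers m₁<⋯<m_r<p and n₁≤⋯≤n_s≤p of 1/(m₁^{k₁}⋯m_r^{k_r} n₁^{l₁}⋯n_s^{l_s} p^a). -/
/-- The multiple zeta value `ζ(k₁,…,k_r)`. -/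
noncomputable def mzv (ks : List ℕ) : ℝ :=
  ∑' f : {f : Fin ks.length → ℕ+ // StrictMono f},
    ∏ i : Fin ks.length, ((f.1 i : ℝ) ^ ks.get i)⁻¹

/-- The multiple zeta-star value `ζ*(l₁,…,l_s)`. -/
noncomputable def mzvStar (ls : List ℕ) : ℝ :=
  ∑' f : {f : Fin ls.length → ℕ+ // Monotone f},
    ∏ i : Fin ls.length, ((f.1 i : ℝ) ^ ls.get i)⁻¹

/-- The Schur multiple zeta value of anti-hook type
`ζ[(k₁,…,k_r)//(l₁,…,l_s); a]`, the sum over positive integers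
`m₁ < ⋯ < m_r < p` and `n₁ ≤ ⋯ ≤ n_s ≤ p` of
`1/(m₁^{k₁} ⋯ m_r^{k_r} n₁^{l₁} ⋯ n_s^{l_s} p^a)`. -/
noncomputable def zetaAntiHook (ks ls : List ℕ) (a : ℕ) : ℝ :=
  ∑' t : {t : (Fin ks.length → ℕ+) × (Fin ls.length → ℕ+) × ℕ+ //
      StrictMono t.1 ∧ Monotone t.2.1 ∧ (∀ i, t.1 i < t.2.2) ∧ (∀ i, t.2.1 i ≤ t.2.2)},
    (∏ i : Fin ks.length, ((t.1.1 i : ℝ) ^ ks.get i)⁻¹) *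
      (∏ i : Fin ls.length, ((t.1.2.1 i : ℝ) ^ ls.get i)⁻¹) * ((t.1.2.2 : ℝ) ^ a)⁻¹

/-!
In `ℝ≥0∞` the product `ζ(k)·ζ*(l)` is a sum over pairs of a strictly increasing tuple
`m₁ < ⋯ < m_r` and a weakly increasing tuple `n₁ ≤ ⋯ ≤ n_s`. Splitting according to whether
`n_s ≤ m_r` or `m_r < n_s`, and calling `p` the larger of the two last entries, turns the two
parts into the two anti-hook sums; no convergence is needed for this. Admissibility makes all
these sums finite, so that the identity descends to `ℝ`: on a monotone tuple
`n₁ ≤ ⋯ ≤ n_s ≤ N` with `l_s ≥ 2` one has `N^{-2} ∏_{i<s} n_i⁻¹ ≤ N^{-σ} ∏_{i<s} n_i^{-σ}` for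
`σ = 1 + 1/s`, which reduces finiteness to that of `(∑ n^{-σ})^s`.
-/

open scoped ENNReal

namespace Fin

variable {α : Type*} [Preorder α] {n : ℕ}

theorem strictMono_snoc_iff {f : Fin n → α} {a : α} :
    StrictMono (snoc f a : Fin (n + 1) → α) ↔ StrictMono f ∧ ∀ i, f i < a := by
  rw [← insertNth_last', strictMono_insertNth_iff]
  simp [castSucc_lt_last]

theorem monotone_snoc_iff {f : Fin n → α} {a : α} :
    Monotone (snoc f a : Fin (n + 1) → α) ↔ Monotone f ∧ ∀ i, f i ≤ a := by
  refine ⟨fun h => ⟨fun i j hij => by simpa using h (castSucc_le_castSucc_iff.2 hij),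
    fun i => by simpa using h (le_last i.castSucc)⟩, ?_⟩
  rintro ⟨hf, ha⟩ i j hij
  cases j using lastCases with
  | last => cases i using lastCases <;> simp [ha]
  | cast j =>
    cases i using lastCases with
    | last => exact absurd hij (castSucc_lt_last j).not_ge
    | cast i => simpa using hf (castSucc_le_castSucc_iff.1 hij)

end Fin

namespace List

variable {γ : Type*}

theorem getLast_cons_eq_get_last (k : γ) (ks : List γ) (h : k :: ks ≠ []) :
    (k :: ks).getLast h = (k :: ks).get (Fin.last ks.length) := by
  simp [getLast_eq_getElem]

theorem init_comp_get_cons_heq {β : Type*} (g : γ → β) (k : γ) (ks : List γ) :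
    HEq (Fin.init fun i => g ((k :: ks).get i)) fun i => g ((k :: ks).dropLast.get i) :=
  (Fin.heq_fun_iff (by simp)).2 fun i => by simp [Fin.init, getElem_dropLast]

end List

namespace ENNReal

theorem tsum_fin_prod_eq_prod_tsum {β : Type*} :
    ∀ {n : ℕ} (w : Fin n → β → ℝ≥0∞), ∑' f : Fin n → β, ∏ i, w i (f i) = ∏ i, ∑' b, w i b
  | 0, w => by simp
  | n + 1, w => by
    rw [← (Fin.consEquiv fun _ => β).tsum_eq, Fin.prod_univ_succ, ← tsum_fin_prod_eq_prod_tsum,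
      ENNReal.tsum_prod', ← ENNReal.tsum_mul_right]
    simp [Fin.consEquiv, Fin.prod_univ_succ, ENNReal.tsum_mul_left]

theorem inv_le_rpow_neg_mul_rpow {x y : ℝ≥0∞} {ε : ℝ} (hx₀ : x ≠ 0) (hx : x ≠ ⊤) (hxy : x ≤ y)
    (hε : 0 ≤ ε) : x⁻¹ ≤ x ^ (-(1 + ε)) * y ^ ε := calc
  x⁻¹ = x ^ (-(1 + ε)) * x ^ ε := by
    rw [← rpow_add _ _ hx₀ hx, show -(1 + ε) + ε = -1 by ring, rpow_neg_one]
  _ ≤ x ^ (-(1 + ε)) * y ^ ε := by gcongr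

end ENNReal

namespace MultipleZeta

section Weighted

variable {α : Type*} [LinearOrder α]

noncomputable def weightedZeta {n : ℕ} (u : Fin n → α → ℝ≥0∞) : ℝ≥0∞ :=
  ∑' f : {f : Fin n → α // StrictMono f}, ∏ i, u i (f.1 i)

noncomputable def weightedZetaStar {n : ℕ} (v : Fin n → α → ℝ≥0∞) : ℝ≥0∞ :=
  ∑' g : {g : Fin n → α // Monotone g}, ∏ j, v j (g.1 j)

noncomputable def weightedAntiHook {r s : ℕ} (u : Fin r → α → ℝ≥0∞) (v : Fin s → α → ℝ≥0∞)
    (w : α → ℝ≥0∞) : ℝ≥0∞ :=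
  ∑' t : {t : (Fin r → α) × (Fin s → α) × α //
      StrictMono t.1 ∧ Monotone t.2.1 ∧ (∀ i, t.1 i < t.2.2) ∧ (∀ j, t.2.1 j ≤ t.2.2)},
    (∏ i, u i (t.1.1 i)) * (∏ j, v j (t.1.2.1 j)) * w t.1.2.2

variable {r s : ℕ}

theorem weightedZeta_le_weightedZetaStar (u : Fin r → α → ℝ≥0∞) :
    weightedZeta u ≤ weightedZetaStar u :=
  ENNReal.tsum_comp_le_tsum_of_injective
    (f := fun f : {f : Fin r → α // StrictMono f} => (⟨f.1, f.2.monotone⟩ : {g // Monotone g}))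
    (fun _ _ h => Subtype.ext (congrArg Subtype.val h :)) _

theorem weightedZeta_mul_weightedZetaStar_eq_tsum (u : Fin r → α → ℝ≥0∞)
    (v : Fin s → α → ℝ≥0∞) :
    weightedZeta u * weightedZetaStar v =
      ∑' x : {x : (Fin r → α) × (Fin s → α) // StrictMono x.1 ∧ Monotone x.2},
        (∏ i, u i (x.1.1 i)) * ∏ j, v j (x.1.2 j) := by
  rw [weightedZeta, weightedZetaStar, ← ENNReal.tsum_mul_right,
    ← Equiv.subtypeProdEquivProd.symm.tsum_eq, ENNReal.tsum_prod']
  simp_rw [← ENNReal.tsum_mul_left]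
  rfl

theorem weightedAntiHook_init_left_eq_tsum (u : Fin (r + 1) → α → ℝ≥0∞)
    (v : Fin s → α → ℝ≥0∞) :
    weightedAntiHook (Fin.init u) v (u (Fin.last r)) =
      ∑' x : {x : (Fin (r + 1) → α) × (Fin s → α) //
          (StrictMono x.1 ∧ Monotone x.2) ∧ ∀ j, x.2 j ≤ x.1 (Fin.last r)},
        (∏ i, u i (x.1.1 i)) * ∏ j, v j (x.1.2 j) := by
  let e : (Fin r → α) × (Fin s → α) × α ≃ (Fin (r + 1) → α) × (Fin s → α) :=
    { toFun := fun t => (Fin.snoc t.1 t.2.2, t.2.1)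
      invFun := fun x => (Fin.init x.1, x.2, x.1 (Fin.last r))
      left_inv := fun t => by simp
      right_inv := fun x => by simp }
  rw [weightedAntiHook, ← (e.subtypeEquiv fun t => ?_).tsum_eq]
  · refine tsum_congr fun t => ?_
    simp [e, Fin.prod_univ_castSucc, Fin.init, mul_right_comm]
  · simp [e, Fin.strictMono_snoc_iff]
    tauto

theorem weightedAntiHook_init_right_eq_tsum (u : Fin r → α → ℝ≥0∞)
    (v : Fin (s + 1) → α → ℝ≥0∞) :
    weightedAntiHook u (Fin.init v) (v (Fin.last s)) =
      ∑' x : {x : (Fin r → α) × (Fin (s + 1) → α) //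
          (StrictMono x.1 ∧ Monotone x.2) ∧ ∀ i, x.1 i < x.2 (Fin.last s)},
        (∏ i, u i (x.1.1 i)) * ∏ j, v j (x.1.2 j) := by
  let e : (Fin r → α) × (Fin s → α) × α ≃ (Fin r → α) × (Fin (s + 1) → α) :=
    { toFun := fun t => (t.1, Fin.snoc t.2.1 t.2.2)
      invFun := fun x => (x.1, Fin.init x.2, x.2 (Fin.last s))
      left_inv := fun t => by simp
      right_inv := fun x => by simp }
  rw [weightedAntiHook, ← (e.subtypeEquiv fun t => ?_).tsum_eq]
  · refine tsum_congr fun t => ?_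
    simp [e, Fin.prod_univ_castSucc, Fin.init, mul_assoc]
  · simp [e, Fin.monotone_snoc_iff]
    tauto

theorem weightedZeta_mul_weightedZetaStar (u : Fin (r + 1) → α → ℝ≥0∞)
    (v : Fin (s + 1) → α → ℝ≥0∞) :
    weightedZeta u * weightedZetaStar v =
      weightedAntiHook (Fin.init u) v (u (Fin.last r)) +
        weightedAntiHook u (Fin.init v) (v (Fin.last s)) := by
  set P : Set ((Fin (r + 1) → α) × (Fin (s + 1) → α)) := {x | StrictMono x.1 ∧ Monotone x.2}
  have hsplit : P = {x | x ∈ P ∧ ∀ j, x.2 j ≤ x.1 (Fin.last r)} ∪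
      {x | x ∈ P ∧ ∀ i, x.1 i < x.2 (Fin.last s)} := by
    ext x
    refine ⟨fun hx => ?_, fun hx => hx.elim And.left And.left⟩
    rcases le_or_gt (x.2 (Fin.last s)) (x.1 (Fin.last r)) with h | h
    · exact Or.inl ⟨hx, fun j => (hx.2 (Fin.le_last j)).trans h⟩
    · exact Or.inr ⟨hx, fun i => (hx.1.monotone (Fin.le_last i)).trans_lt h⟩
  have hdisj : Disjoint {x | x ∈ P ∧ ∀ j, x.2 j ≤ x.1 (Fin.last r)}
      {x | x ∈ P ∧ ∀ i, x.1 i < x.2 (Fin.last s)} :=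
    Set.disjoint_left.2 fun x h₁ h₂ => (h₁.2 (Fin.last s)).not_gt (h₂.2 (Fin.last r))
  rw [weightedZeta_mul_weightedZetaStar_eq_tsum, weightedAntiHook_init_left_eq_tsum,
    weightedAntiHook_init_right_eq_tsum]
  let F : (Fin (r + 1) → α) × (Fin (s + 1) → α) → ℝ≥0∞ :=
    fun x => (∏ i, u i (x.1 i)) * ∏ j, v j (x.2 j)
  exact (congrArg (fun S : Set _ => ∑' x : S, F x) hsplit).trans
    (Summable.tsum_union_disjoint (f := F) hdisj ENNReal.summable ENNReal.summable)

end Weighted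

noncomputable def powWeight (k : ℕ) (m : ℕ+) : ℝ≥0∞ := (((m : ℕ) : ℝ≥0∞) ^ k)⁻¹

theorem powWeight_ne_top (k : ℕ) (m : ℕ+) : powWeight k m ≠ ⊤ := by
  simp [powWeight]

theorem toReal_powWeight (k : ℕ) (m : ℕ+) : (powWeight k m).toReal = (((m : ℕ) : ℝ) ^ k)⁻¹ := by
  simp [powWeight]

theorem powWeight_le_powWeight {j k : ℕ} (h : j ≤ k) (m : ℕ+) : powWeight k m ≤ powWeight j m :=
  ENNReal.inv_le_inv.2 (pow_le_pow_right₀ (by exact_mod_cast m.pos) h)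

theorem prod_powWeight_le_prod_rpow {n : ℕ} (l : Fin (n + 1) → ℕ) (hl : ∀ i, 1 ≤ l i)
    (hlast : 2 ≤ l (Fin.last n)) (f : Fin (n + 1) → ℕ+) (hf : ∀ i, f i ≤ f (Fin.last n)) :
    ∏ i, powWeight (l i) (f i) ≤ ∏ i, ((f i : ℕ) : ℝ≥0∞) ^ (-(1 + (n + 1 : ℝ)⁻¹)) := by
  set ε : ℝ := (n + 1 : ℝ)⁻¹
  set y : ℝ≥0∞ := ((f (Fin.last n) : ℕ) : ℝ≥0∞)
  have hy₀ : y ≠ 0 := by simp [y]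
  have hy : y ≠ ⊤ := by simp [y]
  -- each of the `n` initial entries passes an exponent `ε` on to the last one
  have hexp : (y ^ ε) ^ n * (y ^ 2)⁻¹ = y ^ (-(1 + ε)) := by
    rw [← ENNReal.rpow_mul_natCast, ← ENNReal.rpow_natCast y 2, ← ENNReal.rpow_neg,
      ← ENNReal.rpow_add _ _ hy₀ hy]
    congr 1
    simp only [ε]
    field_simp
    ring
  calc ∏ i, powWeight (l i) (f i)
      = (∏ i : Fin n, powWeight (l i.castSucc) (f i.castSucc)) *
          powWeight (l (Fin.last n)) (f (Fin.last n)) := Fin.prod_univ_castSucc _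
    _ ≤ (∏ i : Fin n, ((f i.castSucc : ℕ) : ℝ≥0∞)⁻¹) * (y ^ 2)⁻¹ := by
        gcongr with i
        · simpa [powWeight] using powWeight_le_powWeight (hl i.castSucc) (f i.castSucc)
        · exact powWeight_le_powWeight hlast _
    _ ≤ (∏ i : Fin n, ((f i.castSucc : ℕ) : ℝ≥0∞) ^ (-(1 + ε)) * y ^ ε) * (y ^ 2)⁻¹ := by
        gcongr with i
        exact ENNReal.inv_le_rpow_neg_mul_rpow (by simp) (by simp)
          (by simp only [y]; exact_mod_cast hf i.castSucc) (by positivity)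
    _ = (∏ i : Fin n, ((f i.castSucc : ℕ) : ℝ≥0∞) ^ (-(1 + ε))) * y ^ (-(1 + ε)) := by
        rw [Finset.prod_mul_distrib, Finset.prod_const, Finset.card_univ, Fintype.card_fin,
          mul_assoc, hexp]
    _ = ∏ i, ((f i : ℕ) : ℝ≥0∞) ^ (-(1 + ε)) := by rw [Fin.prod_univ_castSucc]

theorem tsum_pnat_rpow_neg_ne_top {σ : ℝ} (hσ : 1 < σ) :
    ∑' m : ℕ+, ((m : ℕ) : ℝ≥0∞) ^ (-σ) ≠ ⊤ := by
  have hsum : Summable fun m : ℕ+ => ((m : ℕ) : NNReal) ^ (-σ) :=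
    NNReal.summable_comp_injective (NNReal.summable_rpow.2 (by linarith)) PNat.coe_injective
  have hcoe (m : ℕ+) :
      ((m : ℕ) : ℝ≥0∞) ^ (-σ) = ((((m : ℕ) : NNReal) ^ (-σ) : NNReal) : ℝ≥0∞) := by
    rw [ENNReal.coe_rpow_of_ne_zero (by simp), ENNReal.coe_natCast]
  simpa only [hcoe] using ENNReal.tsum_coe_ne_top_iff_summable.2 hsum

theorem weightedZetaStar_powWeight_ne_top {n : ℕ} (l : Fin (n + 1) → ℕ) (hl : ∀ i, 1 ≤ l i)
    (hlast : 2 ≤ l (Fin.last n)) : weightedZetaStar (fun i => powWeight (l i)) ≠ ⊤ := by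
  set σ : ℝ := 1 + (n + 1 : ℝ)⁻¹
  have hσ : 1 < σ := by
    simp only [σ, lt_add_iff_pos_right]
    positivity
  refine ne_top_of_le_ne_top (ENNReal.pow_ne_top (n := n + 1) (tsum_pnat_rpow_neg_ne_top hσ)) ?_
  calc weightedZetaStar (fun i => powWeight (l i))
      ≤ ∑' f : {f : Fin (n + 1) → ℕ+ // Monotone f}, ∏ i, ((f.1 i : ℕ) : ℝ≥0∞) ^ (-σ) :=
        ENNReal.tsum_le_tsum fun f =>
          prod_powWeight_le_prod_rpow l hl hlast f.1 fun i => f.2 (Fin.le_last i)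
    _ ≤ ∑' f : Fin (n + 1) → ℕ+, ∏ i, ((f i : ℕ) : ℝ≥0∞) ^ (-σ) :=
        ENNReal.tsum_comp_le_tsum_of_injective Subtype.val_injective _
    _ = (∑' m : ℕ+, ((m : ℕ) : ℝ≥0∞) ^ (-σ)) ^ (n + 1) := by
        rw [ENNReal.tsum_fin_prod_eq_prod_tsum fun _ (m : ℕ+) => ((m : ℕ) : ℝ≥0∞) ^ (-σ),
          Finset.prod_const, Finset.card_univ, Fintype.card_fin]

theorem mzv_eq_toReal (ks : List ℕ) :
    mzv ks = (weightedZeta fun i => powWeight (ks.get i)).toReal := by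
  rw [weightedZeta, ENNReal.tsum_toReal_eq fun _ =>
    ENNReal.prod_ne_top fun _ _ => powWeight_ne_top _ _]
  simp [mzv, ENNReal.toReal_prod, toReal_powWeight]

theorem mzvStar_eq_toReal (ls : List ℕ) :
    mzvStar ls = (weightedZetaStar fun j => powWeight (ls.get j)).toReal := by
  rw [weightedZetaStar, ENNReal.tsum_toReal_eq fun _ =>
    ENNReal.prod_ne_top fun _ _ => powWeight_ne_top _ _]
  simp [mzvStar, ENNReal.toReal_prod, toReal_powWeight]

theorem zetaAntiHook_eq_toReal (ks ls : List ℕ) (a : ℕ) :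
    zetaAntiHook ks ls a = (weightedAntiHook (fun i => powWeight (ks.get i))
      (fun j => powWeight (ls.get j)) (powWeight a)).toReal := by
  rw [weightedAntiHook, ENNReal.tsum_toReal_eq fun _ => ENNReal.mul_ne_top
    (ENNReal.mul_ne_top (ENNReal.prod_ne_top fun _ _ => powWeight_ne_top _ _)
      (ENNReal.prod_ne_top fun _ _ => powWeight_ne_top _ _)) (powWeight_ne_top _ _)]
  simp [zetaAntiHook, ENNReal.toReal_prod, toReal_powWeight]

theorem zetaAntiHook_dropLast_cons_left (k : ℕ) (ks ls : List ℕ) (a : ℕ) :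
    zetaAntiHook (k :: ks).dropLast ls a =
      (weightedAntiHook (Fin.init fun i => powWeight ((k :: ks).get i))
        (fun j => powWeight (ls.get j)) (powWeight a)).toReal := by
  rw [zetaAntiHook_eq_toReal]
  congr 2
  · simp
  · exact (List.init_comp_get_cons_heq _ _ _).symm

theorem zetaAntiHook_dropLast_cons_right (ks : List ℕ) (l : ℕ) (ls : List ℕ) (a : ℕ) :
    zetaAntiHook ks (l :: ls).dropLast a =
      (weightedAntiHook (fun i => powWeight (ks.get i))
        (Fin.init fun j => powWeight ((l :: ls).get j)) (powWeight a)).toReal := by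
  rw [zetaAntiHook_eq_toReal]
  congr 2
  · simp
  · exact (List.init_comp_get_cons_heq _ _ _).symm

end MultipleZeta

open MultipleZeta in
/-- For nonempty admissible indices `(k₁,…,k_r)` and `(l₁,…,l_s)`,
`ζ(k₁,…,k_r)·ζ*(l₁,…,l_s)
  = ζ[(k₁,…,k_{r−1})//(l₁,…,l_s); k_r] + ζ[(k₁,…,k_r)//(l₁,…,l_{s−1}); l_s]`. -/
theorem mzv_mul_mzvStar_eq_antiHook (ks ls : List ℕ) (hk : ks ≠ []) (hl : ls ≠ [])
    (hk1 : ∀ k ∈ ks, 1 ≤ k) (hl1 : ∀ l ∈ ls, 1 ≤ l)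
    (hka : 2 ≤ ks.getLast hk) (hla : 2 ≤ ls.getLast hl) :
    mzv ks * mzvStar ls =
      zetaAntiHook ks.dropLast ls (ks.getLast hk) +
        zetaAntiHook ks ls.dropLast (ls.getLast hl) := by
  rcases ks with _ | ⟨k, ks⟩
  · exact absurd rfl hk
  rcases ls with _ | ⟨l, ls⟩
  · exact absurd rfl hl
  simp only [List.getLast_cons_eq_get_last] at hka hla ⊢
  have hζ : weightedZeta (fun i => powWeight ((k :: ks).get i)) ≠ ⊤ :=
    ne_top_of_le_ne_top (weightedZetaStar_powWeight_ne_top (n := ks.length) (k :: ks).get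
      (fun i => hk1 _ (List.get_mem (k :: ks) i)) hka) (weightedZeta_le_weightedZetaStar _)
  have hζstar : weightedZetaStar (fun j => powWeight ((l :: ls).get j)) ≠ ⊤ :=
    weightedZetaStar_powWeight_ne_top (n := ls.length) (l :: ls).get
      (fun j => hl1 _ (List.get_mem (l :: ls) j)) hla
  have hsum := ENNReal.mul_ne_top hζ hζstar
  rw [weightedZeta_mul_weightedZetaStar, ENNReal.add_ne_top] at hsum
  rw [mzv_eq_toReal, mzvStar_eq_toReal, ← ENNReal.toReal_mul, weightedZeta_mul_weightedZetaStar,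
    zetaAntiHook_dropLast_cons_left, zetaAntiHook_dropLast_cons_right]
  exact ENNReal.toReal_add hsum.1 hsum.2
end
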